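/- Fix n ≥ 3. Let D_n(H) be the number of integer polynomials f = Σ_{i=0}^n A_i x^i with A_n ≠ 0, height max_i |A_i| ≤ H, and satisfying Dumas's criterion with respect to some prime. Then D_n(H) ≤ (2H)^{n+1} (1 − 1/ζ(n−1)) + O(H^n) as H → ∞. -/

import Mathlib

open Filter Polynomial Topology

/-- The `p`-adic valuation of an integer, as an integer. -/
noncomputable def vp (p : ℕ) (m : ℤ) : ℤ := (padicValInt p m : ℤ)

/-- Dumas's criterion for `∑ A i * X^i` (degree `n`) with respect to `p`: the Newton diagram
is a single segment from `(0, v_p(A 0))` to `(n, v_p(A n))` containing no lattice points other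
than its endpoints; i.e. all middle points `(i, v_p(A i))` lie on or above the line through the
endpoints, and the open segment contains no lattice point. -/
def DumasAt (p n : ℕ) (A : ℕ → ℤ) : Prop :=
  A 0 ≠ 0 ∧ A n ≠ 0 ∧
  (∀ i : ℕ, 0 < i → i < n → A i ≠ 0 →
    (n : ℤ) * vp p (A i) ≥ ((n : ℤ) - (i : ℤ)) * vp p (A 0) + (i : ℤ) * vp p (A n)) ∧
  ¬ ∃ x y : ℤ, 0 < x ∧ x < (n : ℤ) ∧
    (n : ℤ) * y = ((n : ℤ) - x) * vp p (A 0) + x * vp p (A n)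

/-- The Riemann zeta function at a natural number argument, `ζ(k) = ∑_{m ≥ 1} 1/m^k`. -/
noncomputable def zetaR (k : ℕ) : ℝ := ∑' m : ℕ, (1 : ℝ) / ((m : ℝ) + 1) ^ k

/-- The product `∏_p (1 - 1/p)^2 (1 + 2/p)` over all primes. -/
noncomputable def primeProd : ℝ :=
  ∏' p : Nat.Primes, (1 - 1 / ((p : ℕ) : ℝ)) ^ 2 * (1 + 2 / ((p : ℕ) : ℝ))

/-- `Dcount n H`: number of degree-`n` integer polynomials of height at most `H`
satisfying Dumas's criterion with respect to some prime. -/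
noncomputable def Dcount (n H : ℕ) : ℕ :=
  Set.ncard {A : ℕ → ℤ | A n ≠ 0 ∧ (∀ i, (A i).natAbs ≤ H) ∧ (∀ i, n < i → A i = 0) ∧
    ∃ p : ℕ, p.Prime ∧ DumasAt p n A}

/-- `Pcount n H`: number of degree-`n` integer polynomials of height at most `H`. -/
noncomputable def Pcount (n H : ℕ) : ℕ :=
  Set.ncard {A : ℕ → ℤ | A n ≠ 0 ∧ (∀ i, (A i).natAbs ≤ H) ∧ (∀ i, n < i → A i = 0)}

open Finset

/-!
If `A` satisfies Dumas's criterion at `p`, then `p` divides every middle coefficient and at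
least one of `A 0`, `A n`: the segment cannot join two points of height `0`, as `(1, 0)` would be
a lattice point on it. Splitting according to whether `p ∣ A 0`, at most
`m ^ n * (2H + 1) + (2H + 1 - m) * m ^ n` polynomials of height `≤ H` have this shape, where
`m = 2 ⌊H / p⌋ + 1`; this is `(2H) ^ (n + 1) * (2 / p ^ n - 1 / p ^ (n + 1)) + O(H ^ n / p ^ 2)`.
Summing over the primes `p ≤ H`, it remains to see `∑ (2p - 1) / p ^ (k + 2) ≤ 1 - 1 / ζ(k)` for
`k = n - 1 ≥ 2`. With `a = 2 ^ (-k)` and `b` the sum of `p ^ (-k)` over the odd primes, the left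
side is at most `3a / 4 + 5b / 9`, while `ζ(k) ≥ 1 + a + b` and `b ≤ ∑ 1 / (2j + 1) ^ 2 ≤ 1 / 4`;
for `a, b ≤ 1 / 4` this gives `3a / 4 + 5b / 9 ≤ (a + b) / (1 + a + b) ≤ 1 - 1 / ζ(k)`.
-/

def extendByZero (n : ℕ) (v : Fin (n + 1) → ℤ) : ℕ → ℤ :=
  fun i => if h : i < n + 1 then v ⟨i, h⟩ else 0

def coeffBox (n : ℕ) (F : Fin (n + 1) → Finset ℤ) : Set (ℕ → ℤ) :=
  {A | (∀ i, n < i → A i = 0) ∧ ∀ j : Fin (n + 1), A j ∈ F j}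

section CoeffBox

variable (n : ℕ) (F : Fin (n + 1) → Finset ℤ)

lemma coeffBox_subset_image :
    coeffBox n F ⊆ extendByZero n '' (Fintype.piFinset F : Set (Fin (n + 1) → ℤ)) := by
  rintro A ⟨hsupp, hF⟩
  refine ⟨fun j => A j, Fintype.mem_piFinset.mpr hF, funext fun i => ?_⟩
  by_cases h : i < n + 1
  · simp [extendByZero, h]
  · simp [extendByZero, h, hsupp i (by omega)]

lemma coeffBox_finite : (coeffBox n F).Finite :=
  ((finite_toSet _).image _).subset (coeffBox_subset_image n F)

lemma ncard_coeffBox_le : (coeffBox n F).ncard ≤ ∏ j, (F j).card :=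
  calc (coeffBox n F).ncard
      ≤ (extendByZero n '' (Fintype.piFinset F : Set (Fin (n + 1) → ℤ))).ncard :=
        Set.ncard_le_ncard (coeffBox_subset_image n F) ((finite_toSet _).image _)
    _ ≤ (Fintype.piFinset F : Set (Fin (n + 1) → ℤ)).ncard := Set.ncard_image_le (finite_toSet _)
    _ = ∏ j, (F j).card := by rw [Set.ncard_coe_finset, Fintype.card_piFinset]

end CoeffBox

noncomputable def multiplesIn (p H : ℕ) : Finset ℤ := (Icc (-(H : ℤ)) H).filter ((p : ℤ) ∣ ·)

lemma multiplesIn_subset (p H : ℕ) : multiplesIn p H ⊆ Icc (-(H : ℤ)) H := filter_subset _ _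

lemma card_multiplesIn {p : ℕ} (hp : 0 < p) (H : ℕ) :
    (multiplesIn p H).card = 2 * (H / p) + 1 := by
  have hp' : (0 : ℤ) < p := by exact_mod_cast hp
  have hmap : multiplesIn p H = (Icc (-((H / p : ℕ) : ℤ)) (H / p : ℕ)).map
      ⟨((p : ℤ) * ·), mul_right_injective₀ hp'.ne'⟩ := by
    ext x
    simp only [multiplesIn, mem_filter, mem_Icc, Finset.mem_map, Function.Embedding.coeFn_mk]
    push_cast
    constructor
    · rintro ⟨⟨hl, hr⟩, y, rfl⟩
      refine ⟨y, ⟨?_, ?_⟩, rfl⟩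
      · rw [neg_le, Int.le_ediv_iff_mul_le hp']; linarith
      · rw [Int.le_ediv_iff_mul_le hp']; linarith
    · rintro ⟨y, ⟨hl, hr⟩, rfl⟩
      rw [neg_le, Int.le_ediv_iff_mul_le hp'] at hl
      rw [Int.le_ediv_iff_mul_le hp'] at hr
      exact ⟨⟨by linarith, by linarith⟩, dvd_mul_right _ _⟩
  rw [hmap, card_map, Int.card_Icc]
  omega

noncomputable def initDvdBoxes (p n H : ℕ) : Fin (n + 1) → Finset ℤ :=
  fun j => if (j : ℕ) = n then Icc (-(H : ℤ)) H else multiplesIn p H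

noncomputable def tailDvdBoxes (p n H : ℕ) : Fin (n + 1) → Finset ℤ :=
  fun j => if (j : ℕ) = 0 then Icc (-(H : ℤ)) H \ multiplesIn p H else multiplesIn p H

lemma prod_card_initDvdBoxes {p : ℕ} (hp : 0 < p) (n H : ℕ) :
    ∏ j, (initDvdBoxes p n H j).card = (2 * (H / p) + 1) ^ n * (2 * H + 1) := by
  have hinit (i : Fin n) : initDvdBoxes p n H i.castSucc = multiplesIn p H :=
    if_neg (by simp [i.isLt.ne])
  rw [Fin.prod_univ_castSucc]
  simp only [hinit, prod_const, card_univ, Fintype.card_fin, card_multiplesIn hp]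
  simp [initDvdBoxes]
  omega

lemma prod_card_tailDvdBoxes {p : ℕ} (hp : 0 < p) (n H : ℕ) :
    ∏ j, (tailDvdBoxes p n H j).card = (2 * H - 2 * (H / p)) * (2 * (H / p) + 1) ^ n := by
  rw [Fin.prod_univ_succ]
  simp only [tailDvdBoxes, Fin.val_zero, Fin.val_succ, if_true, Nat.succ_ne_zero, if_false,
    prod_const, card_univ, Fintype.card_fin, card_sdiff_of_subset (multiplesIn_subset p H),
    card_multiplesIn hp, Int.card_Icc]
  congr 1
  omega

lemma dvd_of_vp_pos {p : ℕ} {m : ℤ} (h : 0 < vp p m) : (p : ℤ) ∣ m :=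
  (dvd_pow_self _ (by unfold vp at h; omega)).trans (padicValInt_dvd m)

namespace DumasAt

variable {p n : ℕ} {A : ℕ → ℤ}

lemma vp_zero_add_vp_last_pos (hn : 2 ≤ n) (h : DumasAt p n A) :
    0 < vp p (A 0) + vp p (A n) := by
  have h0 : 0 ≤ vp p (A 0) := Int.natCast_nonneg _
  have hn' : 0 ≤ vp p (A n) := Int.natCast_nonneg _
  by_contra! hle
  exact h.2.2.2 ⟨1, vp p (A 0), one_pos, by omega, by
    rw [show vp p (A n) = vp p (A 0) by omega]; ring⟩

lemma dvd_coeff (hn : 2 ≤ n) (h : DumasAt p n A) {i : ℕ} (hi : 0 < i) (hin : i < n) :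
    (p : ℤ) ∣ A i := by
  rcases eq_or_ne (A i) 0 with hAi | hAi
  · exact hAi ▸ dvd_zero _
  refine dvd_of_vp_pos ?_
  have hline := h.2.2.1 i hi hin hAi
  have hpos := h.vp_zero_add_vp_last_pos hn
  have h0 : 0 ≤ vp p (A 0) := Int.natCast_nonneg _
  have hn' : 0 ≤ vp p (A n) := Int.natCast_nonneg _
  have hi' : (1 : ℤ) ≤ i := by exact_mod_cast hi
  have hin' : (i : ℤ) + 1 ≤ n := by exact_mod_cast hin
  nlinarith

lemma dvd_zero_or_dvd_last (hn : 2 ≤ n) (h : DumasAt p n A) :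
    (p : ℤ) ∣ A 0 ∨ (p : ℤ) ∣ A n := by
  have hpos := h.vp_zero_add_vp_last_pos hn
  by_cases h0 : 0 < vp p (A 0)
  · exact .inl (dvd_of_vp_pos h0)
  · exact .inr (dvd_of_vp_pos (by omega))

lemma mem_coeffBox_union {H : ℕ} (hn : 2 ≤ n) (h : DumasAt p n A)
    (hH : ∀ i, (A i).natAbs ≤ H) (hsupp : ∀ i, n < i → A i = 0) :
    A ∈ coeffBox n (initDvdBoxes p n H) ∪ coeffBox n (tailDvdBoxes p n H) := by
  have hbox (i : ℕ) : A i ∈ Icc (-(H : ℤ)) H := by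
    have := hH i
    rw [mem_Icc]
    omega
  have hmult {i : ℕ} (hi : (p : ℤ) ∣ A i) : A i ∈ multiplesIn p H := mem_filter.mpr ⟨hbox i, hi⟩
  have hmid {j : Fin (n + 1)} (h0 : (j : ℕ) ≠ 0) (hn : (j : ℕ) ≠ n) : (p : ℤ) ∣ A j :=
    h.dvd_coeff (by omega) (by omega) (by omega)
  by_cases hA0 : (p : ℤ) ∣ A 0
  · refine .inl ⟨hsupp, fun j => ?_⟩
    unfold initDvdBoxes
    split_ifs with hjn
    · exact hbox j
    · rcases eq_or_ne (j : ℕ) 0 with hj0 | hj0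
      · rw [hj0]
        exact hmult hA0
      · exact hmult (hmid hj0 hjn)
  · have hAn := (h.dvd_zero_or_dvd_last hn).resolve_left hA0
    refine .inr ⟨hsupp, fun j => ?_⟩
    unfold tailDvdBoxes
    split_ifs with hj0
    · rw [hj0]
      exact mem_sdiff.mpr ⟨hbox 0, fun h => hA0 (mem_filter.mp h).2⟩
    · rcases eq_or_ne (j : ℕ) n with hjn | hjn
      · rw [hjn]
        exact hmult hAn
      · exact hmult (hmid hj0 hjn)

end DumasAt

lemma le_of_dvd_of_natAbs_le {p H : ℕ} {a : ℤ} (ha : a ≠ 0) (hd : (p : ℤ) ∣ a)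
    (hH : a.natAbs ≤ H) : p ≤ H :=
  (Nat.le_of_dvd (Int.natAbs_pos.mpr ha) (Int.ofNat_dvd_left.mp hd)).trans hH

def dvdBoxesCard (n H p : ℕ) : ℕ :=
  (2 * (H / p) + 1) ^ n * (2 * H + 1) + (2 * H - 2 * (H / p)) * (2 * (H / p) + 1) ^ n

lemma Dcount_le_sum_dvdBoxesCard {n : ℕ} (hn : 2 ≤ n) (H : ℕ) :
    Dcount n H ≤ ∑ p ∈ Nat.primesBelow (H + 1), dvdBoxesCard n H p := by
  set U := ⋃ p ∈ Nat.primesBelow (H + 1),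
    coeffBox n (initDvdBoxes p n H) ∪ coeffBox n (tailDvdBoxes p n H)
  have hsub : {A : ℕ → ℤ | A n ≠ 0 ∧ (∀ i, (A i).natAbs ≤ H) ∧ (∀ i, n < i → A i = 0) ∧
      ∃ p : ℕ, p.Prime ∧ DumasAt p n A} ⊆ U := by
    rintro A ⟨hAn, hH, hsupp, p, hp, hD⟩
    have hpH : p ≤ H := by
      rcases hD.dvd_zero_or_dvd_last hn with hd | hd
      · exact le_of_dvd_of_natAbs_le hD.1 hd (hH 0)
      · exact le_of_dvd_of_natAbs_le hAn hd (hH n)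
    exact Set.mem_biUnion (Nat.mem_primesBelow.mpr ⟨by omega, hp⟩)
      (hD.mem_coeffBox_union hn hH hsupp)
  have hU : U.Finite := (finite_toSet _).biUnion fun p _ =>
    (coeffBox_finite n _).union (coeffBox_finite n _)
  calc Dcount n H ≤ U.ncard := Set.ncard_le_ncard hsub hU
    _ ≤ _ := set_ncard_biUnion_le _ _
    _ ≤ _ := sum_le_sum fun p hp => by
      have hp0 := (Nat.mem_primesBelow.mp hp).2.pos
      rw [dvdBoxesCard, ← prod_card_initDvdBoxes hp0, ← prod_card_tailDvdBoxes hp0]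
      exact (Set.ncard_union_le _ _).trans
        (add_le_add (ncard_coeffBox_le n _) (ncard_coeffBox_le n _))

lemma pow_mul_sub_le_of_abs_sub_le_one {n : ℕ} (hn : 1 ≤ n) {x t B : ℝ} (hxt : |x - t| ≤ 1)
    (ht : 1 ≤ t) (hB : 0 ≤ B) :
    x ^ n * (2 * B - x) ≤
      t ^ n * (2 * (B - 1) - t) + (2 * n * B + (2 * n + 4) * t) * (2 * t) ^ (n - 1) := by
  set P := (2 * t) ^ (n - 1)
  have hx : |x| ≤ 2 * t := by
    rw [abs_of_nonneg (by linarith [neg_abs_le (x - t)])]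
    linarith [le_abs_self (x - t)]
  have hM : max |x| |t| ≤ 2 * t := max_le hx (by rw [abs_of_nonneg (by linarith)]; linarith)
  have hP : 0 ≤ P := by positivity
  have hPsucc : (2 * t) ^ n = 2 * t * P := by
    rw [← pow_succ', Nat.sub_add_cancel hn]
  have hdiff (m : ℕ) : |x ^ m - t ^ m| ≤ m * max |x| |t| ^ (m - 1) :=
    (abs_pow_sub_pow_le x t m).trans (by
      rw [mul_assoc]
      exact mul_le_of_le_one_left (by positivity) hxt)
  have e1 : x ^ n - t ^ n ≤ n * P :=
    (le_abs_self _).trans ((hdiff n).trans (by gcongr; exact pow_le_pow_left₀ (by positivity) hM _))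
  have e2 : t ^ (n + 1) - x ^ (n + 1) ≤ (n + 1) * (2 * t * P) :=
    calc t ^ (n + 1) - x ^ (n + 1) ≤ |x ^ (n + 1) - t ^ (n + 1)| := by
          rw [abs_sub_comm]; exact le_abs_self _
      _ ≤ (n + 1) * (2 * t) ^ n := by
          refine (hdiff (n + 1)).trans ?_
          push_cast
          gcongr
      _ = (n + 1) * (2 * t * P) := by rw [hPsucc]
  have e3 : t ^ n ≤ t * P := by
    rw [← Nat.sub_add_cancel hn, pow_succ']
    exact mul_le_mul_of_nonneg_left (pow_le_pow_left₀ (by linarith) (by linarith) _) (by linarith)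
  rw [pow_succ, pow_succ] at e2
  nlinarith [mul_le_mul_of_nonneg_left e1 (by linarith : (0 : ℝ) ≤ 2 * B)]

lemma abs_cast_two_mul_div_add_one_sub_le (H p : ℕ) :
    |((2 * (H / p) + 1 : ℕ) : ℝ) - 2 * H / p| ≤ 1 := by
  have h1 := Nat.floor_le (by positivity : (0 : ℝ) ≤ H / p)
  have h2 := Nat.lt_floor_add_one ((H : ℝ) / p)
  rw [Nat.floor_div_eq_div] at h1 h2
  rw [abs_le]
  push_cast
  constructor <;> linarith [mul_div_assoc (2 : ℝ) H p]

lemma dvdBoxesCard_remainder_le {n H p : ℕ} (hn : 3 ≤ n) (hp : 2 ≤ p) (hpH : p ≤ H) :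
    (2 * n * (2 * H + 1) + (2 * n + 4) * (2 * H / p)) * (2 * (2 * H / p)) ^ (n - 1) ≤
      (8 * n + 4) * 4 ^ (n - 1) * (H : ℝ) ^ n * (1 / (p : ℝ) ^ 2) := by
  have hp0 : (0 : ℝ) < p := by positivity
  have hp2 : (2 : ℝ) ≤ p := by exact_mod_cast hp
  have hpH' : (p : ℝ) ≤ H := by exact_mod_cast hpH
  have hcoef : 2 * n * (2 * H + 1) + (2 * n + 4) * (2 * H / p) ≤ (8 * n + 4) * (H : ℝ) := by
    have htH : 2 * (H : ℝ) / p ≤ H := by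
      rw [div_le_iff₀ hp0]; nlinarith
    have : (0 : ℝ) ≤ n := by positivity
    nlinarith
  have hpow : (2 * (2 * H / p)) ^ (n - 1) ≤
      4 ^ (n - 1) * (H : ℝ) ^ (n - 1) * (1 / (p : ℝ) ^ 2) := by
    have hpn : (p : ℝ) ^ 2 ≤ (p : ℝ) ^ (n - 1) := pow_le_pow_right₀ (by linarith) (by omega)
    calc (2 * (2 * H / p)) ^ (n - 1) =
          4 ^ (n - 1) * (H : ℝ) ^ (n - 1) * (1 / (p : ℝ) ^ (n - 1)) := by
          rw [← mul_pow, ← one_div_pow, ← mul_pow]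
          ring
      _ ≤ _ := by gcongr
  calc _ ≤ (8 * n + 4) * (H : ℝ) * (4 ^ (n - 1) * (H : ℝ) ^ (n - 1) * (1 / (p : ℝ) ^ 2)) :=
        mul_le_mul hcoef hpow (by positivity) (by positivity)
    _ = _ := by
        rw [← Nat.sub_add_cancel (by omega : 1 ≤ n), pow_succ' (H : ℝ), Nat.add_sub_cancel]
        ring

lemma dvdBoxesCard_le {n H p : ℕ} (hn : 3 ≤ n) (hp : 2 ≤ p) (hpH : p ≤ H) :
    (dvdBoxesCard n H p : ℝ) ≤
      (2 * H) ^ (n + 1) * (2 / (p : ℝ) ^ n - 1 / (p : ℝ) ^ (n + 1)) +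
        (8 * n + 4) * 4 ^ (n - 1) * (H : ℝ) ^ n * (1 / (p : ℝ) ^ 2) := by
  have hp0 : (0 : ℝ) < p := by positivity
  have hcount : (dvdBoxesCard n H p : ℝ) =
      ((2 * (H / p) + 1 : ℕ) : ℝ) ^ n * (2 * (2 * H + 1) - ((2 * (H / p) + 1 : ℕ) : ℝ)) := by
    have : 2 * (H / p) ≤ 2 * H := Nat.mul_le_mul_left 2 (Nat.div_le_self H p)
    rw [dvdBoxesCard]
    push_cast [Nat.cast_sub this]
    ring
  have ht1 : 1 ≤ 2 * (H : ℝ) / p := by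
    rw [le_div_iff₀ hp0]
    linarith [(Nat.cast_le (α := ℝ)).mpr hpH]
  have hmain : (2 * H / p : ℝ) ^ n * (2 * (2 * H + 1 - 1) - 2 * H / p) =
      (2 * H) ^ (n + 1) * (2 / (p : ℝ) ^ n - 1 / (p : ℝ) ^ (n + 1)) := by
    rw [div_pow]
    field_simp
    ring
  rw [hcount, ← hmain]
  exact (pow_mul_sub_le_of_abs_sub_le_one (by omega) (abs_cast_two_mul_div_add_one_sub_le H p) ht1
    (by positivity)).trans ((add_le_add_iff_left _).mpr (dvdBoxesCard_remainder_le hn hp hpH))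

lemma sum_inv_pow_le_zetaR {k : ℕ} (hk : 2 ≤ k) (s : Finset ℕ) :
    ∑ m ∈ s, 1 / (m : ℝ) ^ k ≤ zetaR k := by
  have hsum : Summable fun m : ℕ => 1 / (m : ℝ) ^ k := Real.summable_one_div_nat_pow.mpr hk
  have hzeta : zetaR k = ∑' m : ℕ, 1 / (m : ℝ) ^ k := by
    rw [hsum.tsum_eq_zero_add, zetaR]
    simp [zero_pow (by omega : k ≠ 0)]
  rw [hzeta]
  exact hsum.sum_le_tsum s fun m _ => by positivity

lemma sum_range_inv_sq_odd_le (N : ℕ) :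
    ∑ j ∈ range N, 1 / (2 * (j : ℝ) + 3) ^ 2 ≤ 1 / 4 - 1 / (4 * ((N : ℝ) + 1)) := by
  induction N with
  | zero => norm_num
  | succ N ih =>
    have hstep : 1 / (2 * (N : ℝ) + 3) ^ 2 ≤
        1 / (4 * ((N : ℝ) + 1)) - 1 / (4 * ((N : ℝ) + 1 + 1)) := by
      rw [div_sub_div _ _ (by positivity) (by positivity),
        div_le_div_iff₀ (by positivity) (by positivity)]
      nlinarith
    rw [sum_range_succ]
    push_cast
    linarith

lemma sum_inv_sq_odd_le (T : Finset ℕ) (hT : ∀ m ∈ T, Odd m ∧ 3 ≤ m) :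
    ∑ m ∈ T, 1 / (m : ℝ) ^ 2 ≤ 1 / 4 := by
  set J := T.image fun m => (m - 3) / 2
  have hT_eq : T = J.image fun j => 2 * j + 3 := by
    ext m
    simp only [J, mem_image]
    constructor
    · intro hm
      obtain ⟨⟨r, hr⟩, h3⟩ := hT m hm
      exact ⟨_, ⟨m, hm, rfl⟩, by omega⟩
    · rintro ⟨_, ⟨m', hm', rfl⟩, rfl⟩
      obtain ⟨⟨r, hr⟩, h3⟩ := hT m' hm'
      convert hm' using 1
      omega
  obtain ⟨N, hN⟩ : ∃ N, J ⊆ range N :=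
    ⟨J.sup id + 1, fun j hj => mem_range.mpr (Nat.lt_succ_of_le (le_sup (f := id) hj))⟩
  calc ∑ m ∈ T, 1 / (m : ℝ) ^ 2
      = ∑ j ∈ J, 1 / (2 * (j : ℝ) + 3) ^ 2 := by
        rw [hT_eq, sum_image fun a _ b _ h => by omega]
        push_cast; rfl
    _ ≤ ∑ j ∈ range N, 1 / (2 * (j : ℝ) + 3) ^ 2 :=
        sum_le_sum_of_subset_of_nonneg hN fun _ _ _ => by positivity
    _ ≤ 1 / 4 := (sum_range_inv_sq_odd_le N).trans
        (by linarith [show 0 ≤ 1 / (4 * ((N : ℝ) + 1)) by positivity])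

lemma two_div_pow_succ_sub_le {p : ℕ} (hp : 3 ≤ p) (k : ℕ) :
    2 / (p : ℝ) ^ (k + 1) - 1 / (p : ℝ) ^ (k + 2) ≤ 5 / 9 * (1 / (p : ℝ) ^ k) := by
  have hp' : (3 : ℝ) ≤ p := by exact_mod_cast hp
  have hpk : (0 : ℝ) < (p : ℝ) ^ k := by positivity
  rw [pow_succ, pow_succ, pow_succ]
  field_simp
  nlinarith [mul_le_mul_of_nonneg_left (by nlinarith : (9 : ℝ) * (2 * p - 1) ≤ 5 * p ^ 2) hpk.le]

section PrimeSums

variable {S : Finset ℕ}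

lemma odd_and_three_le_of_mem_erase_two (hS : ∀ p ∈ S, p.Prime) {p : ℕ} (hp : p ∈ S.erase 2) :
    Odd p ∧ 3 ≤ p := by
  obtain ⟨hp2, hpS⟩ := mem_erase.mp hp
  have := (hS p hpS).two_le
  exact ⟨(hS p hpS).odd_of_ne_two hp2, by omega⟩

lemma sum_two_div_pow_succ_sub_le (hS : ∀ p ∈ S, p.Prime) (k : ℕ) :
    ∑ p ∈ S, (2 / (p : ℝ) ^ (k + 1) - 1 / (p : ℝ) ^ (k + 2)) ≤
      3 / 4 * (1 / 2 ^ k) + 5 / 9 * ∑ p ∈ S.erase 2, 1 / (p : ℝ) ^ k := by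
  have hterm2 :
      2 / ((2 : ℕ) : ℝ) ^ (k + 1) - 1 / ((2 : ℕ) : ℝ) ^ (k + 2) = 3 / 4 * (1 / 2 ^ k) := by
    push_cast
    field_simp
    ring
  have hodd : ∑ p ∈ S.erase 2, (2 / (p : ℝ) ^ (k + 1) - 1 / (p : ℝ) ^ (k + 2)) ≤
      5 / 9 * ∑ p ∈ S.erase 2, 1 / (p : ℝ) ^ k := by
    rw [mul_sum]
    exact sum_le_sum fun p hp =>
      two_div_pow_succ_sub_le (odd_and_three_le_of_mem_erase_two hS hp).2 k
  by_cases h2 : 2 ∈ S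
  · rw [← add_sum_erase S _ h2, hterm2]
    linarith
  · rw [erase_eq_of_notMem h2] at hodd ⊢
    linarith [show (0 : ℝ) < 1 / 2 ^ k by positivity]

lemma sum_erase_two_inv_pow_le (hS : ∀ p ∈ S, p.Prime) {k : ℕ} (hk : 2 ≤ k) :
    ∑ p ∈ S.erase 2, 1 / (p : ℝ) ^ k ≤ 1 / 4 :=
  calc _ ≤ ∑ p ∈ S.erase 2, 1 / (p : ℝ) ^ 2 := by
        gcongr with p hp
        · have := (odd_and_three_le_of_mem_erase_two hS hp).2
          positivity
        · exact_mod_cast (odd_and_three_le_of_mem_erase_two hS hp).2.trans' (by norm_num)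
    _ ≤ 1 / 4 := sum_inv_sq_odd_le _ fun _ => odd_and_three_le_of_mem_erase_two hS

lemma one_add_sum_inv_pow_le_zetaR (hS : ∀ p ∈ S, p.Prime) {k : ℕ} (hk : 2 ≤ k) :
    1 + 1 / 2 ^ k + ∑ p ∈ S.erase 2, 1 / (p : ℝ) ^ k ≤ zetaR k := by
  have h1 : (1 : ℕ) ∉ insert 2 (S.erase 2) := by
    simp only [mem_insert, mem_erase]
    rintro (h | ⟨-, h⟩)
    · omega
    · exact Nat.not_prime_one (hS 1 h)
  convert sum_inv_pow_le_zetaR hk (insert 1 (insert 2 (S.erase 2))) using 1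
  rw [sum_insert h1, sum_insert (notMem_erase 2 S)]
  push_cast
  ring

lemma sum_primes_le_one_sub_inv_zetaR (hS : ∀ p ∈ S, p.Prime) {k : ℕ} (hk : 2 ≤ k) :
    ∑ p ∈ S, (2 / (p : ℝ) ^ (k + 1) - 1 / (p : ℝ) ^ (k + 2)) ≤ 1 - 1 / zetaR k := by
  set a : ℝ := 1 / 2 ^ k with ha
  set b : ℝ := ∑ p ∈ S.erase 2, 1 / (p : ℝ) ^ k
  have ha0 : 0 < a := by positivity
  have ha_le : a ≤ 1 / 4 :=
    calc a ≤ 1 / 2 ^ 2 := by rw [ha]; gcongr; norm_num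
      _ = 1 / 4 := by norm_num
  have hb0 : 0 ≤ b := sum_nonneg fun p _ => by positivity
  have hb_le : b ≤ 1 / 4 := sum_erase_two_inv_pow_le hS hk
  calc _ ≤ 3 / 4 * a + 5 / 9 * b := sum_two_div_pow_succ_sub_le hS k
    _ ≤ 1 - 1 / (1 + a + b) := by
        rw [le_sub_iff_add_le, ← le_sub_iff_add_le', div_le_iff₀ (by positivity)]
        nlinarith [mul_nonneg ha0.le (sub_nonneg.mpr ha_le),
          mul_nonneg hb0 (sub_nonneg.mpr hb_le), mul_nonneg hb0 (sub_nonneg.mpr ha_le)]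
    _ ≤ 1 - 1 / zetaR k := by
        gcongr
        exact one_add_sum_inv_pow_le_zetaR hS hk

end PrimeSums

lemma sum_primesBelow_inv_sq_le_one (H : ℕ) :
    ∑ p ∈ Nat.primesBelow (H + 1), 1 / (p : ℝ) ^ 2 ≤ 1 := by
  simp only [one_div]
  calc _ ≤ ∑ m ∈ Ioo 1 (H + 1), ((m : ℝ) ^ 2)⁻¹ := by
        refine sum_le_sum_of_subset_of_nonneg (fun p hp => ?_) fun _ _ _ => by positivity
        obtain ⟨hpH, hp⟩ := Nat.mem_primesBelow.mp hp
        exact mem_Ioo.mpr ⟨hp.one_lt, hpH⟩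
    _ ≤ 2 / ((1 : ℕ) + 1) := sum_Ioo_inv_sq_le 1 (H + 1)
    _ = 1 := by norm_num

theorem stmt_6 (n : ℕ) (hn : 3 ≤ n) :
    ∃ C : ℝ, 0 < C ∧ ∀ H : ℕ, 1 ≤ H →
      (Dcount n H : ℝ) ≤ (2 * (H : ℝ)) ^ (n + 1) * (1 - 1 / zetaR (n - 1)) + C * (H : ℝ) ^ n := by
  refine ⟨(8 * n + 4) * 4 ^ (n - 1), by positivity, fun H _ => ?_⟩
  set S := Nat.primesBelow (H + 1)
  have hmain : ∑ p ∈ S, (2 / (p : ℝ) ^ n - 1 / (p : ℝ) ^ (n + 1)) ≤ 1 - 1 / zetaR (n - 1) := by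
    have := sum_primes_le_one_sub_inv_zetaR (S := S) (fun p hp => (Nat.mem_primesBelow.mp hp).2)
      (k := n - 1) (by omega)
    rwa [show n - 1 + 1 = n by omega, show n - 1 + 2 = n + 1 by omega] at this
  calc (Dcount n H : ℝ) ≤ ∑ p ∈ S, (dvdBoxesCard n H p : ℝ) := by
        exact_mod_cast Dcount_le_sum_dvdBoxesCard (by omega) H
    _ ≤ ∑ p ∈ S, ((2 * H) ^ (n + 1) * (2 / (p : ℝ) ^ n - 1 / (p : ℝ) ^ (n + 1)) +
          (8 * n + 4) * 4 ^ (n - 1) * (H : ℝ) ^ n * (1 / (p : ℝ) ^ 2)) :=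
        sum_le_sum fun p hp => by
          obtain ⟨hpH, hp⟩ := Nat.mem_primesBelow.mp hp
          exact dvdBoxesCard_le hn hp.two_le (by omega)
    _ = (2 * H) ^ (n + 1) * ∑ p ∈ S, (2 / (p : ℝ) ^ n - 1 / (p : ℝ) ^ (n + 1)) +
          (8 * n + 4) * 4 ^ (n - 1) * (H : ℝ) ^ n * ∑ p ∈ S, 1 / (p : ℝ) ^ 2 := by
        rw [sum_add_distrib, mul_sum, mul_sum]
    _ ≤ (2 * H) ^ (n + 1) * (1 - 1 / zetaR (n - 1)) +
          (8 * n + 4) * 4 ^ (n - 1) * (H : ℝ) ^ n * 1 := by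
        gcongr
        exact sum_primesBelow_inv_sq_le_one H
    _ = _ := by rw [mul_one]
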